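/- (Consistency merge lemma, Lemma 1 of the paper, combined form) Let T* join T' and T'' by edge (v, v_j), S = S' ∪ S''. If color i is both left consistent and right consistent (as defined via the tuples (ℓ', L', H', r'_i) of (T',S') and (ℓ'', L'', H'', r''_i) of (T'',S'')), then color i is consistent in (T*, S): every vertex of color i in T* has a nearest neighbor in S of color i. -/

import Mathlib

/-- Distance from a vertex to a set of vertices (∞ if the set is empty). -/
noncomputable def setDist {V : Type*} (G : SimpleGraph V) (u : V) (S : Set V) : ℕ∞ :=
  ⨅ x ∈ S, G.edist u x

/-- The set of nearest neighbors of `u` in `S`. -/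
def nearest {V : Type*} (G : SimpleGraph V) (S : Set V) (u : V) : Set V :=
  {x ∈ S | G.edist u x = setDist G u S}

/-- A vertex `u` is consistent in `(G, S)` if some nearest neighbor of `u` in `S`
has the same color as `u`. -/
def ConsistentAt {V : Type*} {k : ℕ} (G : SimpleGraph V) (c : V → Fin k) (S : Set V)
    (u : V) : Prop :=
  ∃ x ∈ nearest G S u, c x = c u

/-- `S` is a consistent subset of the vertex-colored graph `(G, c)`. -/
def Consistent {V : Type*} {k : ℕ} (G : SimpleGraph V) (c : V → Fin k) (S : Set V) : Prop :=
  ∀ u, ConsistentAt G c S u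

/-- Color `i` is inconsistent in the part of the graph with vertex set `A`,
with respect to the candidate set `S` (distances taken in `G`, which agree with
the subtree distances). -/
def ColorInconsistentOn {V : Type*} {k : ℕ} (G : SimpleGraph V) (c : V → Fin k)
    (i : Fin k) (A : Set V) (S : Set V) : Prop :=
  ∃ w ∈ A, c w = i ∧ ¬ ConsistentAt G c S w

/-- Color `i` occurs among the nearest neighbors of `u` in `S` (the set `L`). -/
def ColorInNearest {V : Type*} {k : ℕ} (G : SimpleGraph V) (c : V → Fin k)
    (i : Fin k) (S : Set V) (u : V) : Prop :=
  ∃ x ∈ nearest G S u, c x = i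

open Classical in
/-- The value `r_i` of the tuple for the subtree on vertex set `A` rooted at `u`
with candidate set `S`: the minimum of `dist(w,S) − dist(w,u)` over inconsistent
vertices `w` of color `i` if color `i` is inconsistent, and the maximum of
`dist(w,S) − dist(w,u)` over all vertices `w` of color `i` otherwise.
(Truncated subtraction in `ℕ∞` clamps negative values to `0`, the empty supremum
is `0`, and the value is `∞` when `S = ∅` in the inconsistent case.) -/
noncomputable def rval {V : Type*} {k : ℕ} (G : SimpleGraph V) (c : V → Fin k)
    (i : Fin k) (A : Set V) (u : V) (S : Set V) : ℕ∞ :=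
  if ColorInconsistentOn G c i A S then
    ⨅ w ∈ {w ∈ A | c w = i ∧ ¬ ConsistentAt G c S w}, (setDist G w S - G.edist w u)
  else
    ⨆ w ∈ {w ∈ A | c w = i}, (setDist G w S - G.edist w u)

/-- Color `i` is left consistent for the join of `(T', S')` (vertices `A`, root `v`)
and `(T'', S'')` (vertices `B`, root `v_j`). -/
def LeftConsistent {V : Type*} {k : ℕ} (G : SimpleGraph V) (c : V → Fin k)
    (i : Fin k) (A B : Set V) (v vj : V) (S' S'' : Set V) : Prop :=
  (¬ ColorInconsistentOn G c i A S' ∧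
    (rval G c i A v S' ≤ setDist G vj S'' + 1 ∨ ColorInNearest G c i S'' vj)) ∨
  (ColorInconsistentOn G c i A S' ∧ ColorInNearest G c i S'' vj ∧
    setDist G vj S'' + 1 ≤ rval G c i A v S')

/-- Color `i` is right consistent: the symmetric condition. -/
def RightConsistent {V : Type*} {k : ℕ} (G : SimpleGraph V) (c : V → Fin k)
    (i : Fin k) (A B : Set V) (v vj : V) (S' S'' : Set V) : Prop :=
  (¬ ColorInconsistentOn G c i B S'' ∧
    (rval G c i B vj S'' ≤ setDist G v S' + 1 ∨ ColorInNearest G c i S' v)) ∨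
  (ColorInconsistentOn G c i B S'' ∧ ColorInNearest G c i S' v ∧
    setDist G v S' + 1 ≤ rval G c i B vj S'')

/-!
A vertex `w` of colour `i` in `T'` has two candidate nearest sets: its nearest neighbours in `S'`,
at distance `d' = dist(w, S')`, and, since every path to `T''` passes through the edge `{v, v_j}`,
the nearest neighbours of `v_j` in `S''`, at distance `dist(w, v) + 1 + ℓ''`. If `w` is consistent
in `(T', S')`, then either `d' - dist(w, v) ≤ r'_i ≤ ℓ'' + 1`, so `S'` still holds a nearest
neighbour of `w`, or colour `i` occurs in `L''` and serves `w`. If `w` is inconsistent in `(T', S')`,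
then `ℓ'' + 1 ≤ r'_i ≤ d' - dist(w, v)` puts `S''` at least as close as `S'`, and `i ∈ L''`
supplies a nearest neighbour of colour `i`. Vertices of `T''` are handled symmetrically.
-/

open SimpleGraph

section Nearest

variable {V : Type*} (G : SimpleGraph V)

lemma setDist_union (w : V) (S T : Set V) :
    setDist G w (S ∪ T) = setDist G w S ⊓ setDist G w T :=
  iInf_union

lemma mem_nearest_union_left {S T : Set V} {w x : V} (hx : x ∈ nearest G S w)
    (hle : setDist G w S ≤ setDist G w T) : x ∈ nearest G (S ∪ T) w :=
  ⟨Or.inl hx.1, by rw [hx.2, setDist_union, inf_eq_left.mpr hle]⟩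

lemma mem_nearest_union_right {S T : Set V} {w x : V} (hx : x ∈ nearest G T w)
    (hle : setDist G w T ≤ setDist G w S) : x ∈ nearest G (S ∪ T) w :=
  Set.union_comm T S ▸ mem_nearest_union_left G hx hle

lemma setDist_eq_add_of_edist_eq {S : Set V} {u w : V} (a : ℕ∞)
    (h : ∀ x ∈ S, G.edist w x = a + G.edist u x) : setDist G w S = a + setDist G u S := by
  rw [setDist, setDist, ENat.add_iInf₂]
  exact iInf_congr fun x => iInf_congr (h x)

lemma mem_nearest_of_edist_eq {S : Set V} {u w y : V} (a : ℕ∞)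
    (h : ∀ x ∈ S, G.edist w x = a + G.edist u x) (hy : y ∈ nearest G S u) :
    y ∈ nearest G S w :=
  ⟨hy.1, by rw [h y hy.1, hy.2, setDist_eq_add_of_edist_eq G a h]⟩

variable {G} {k : ℕ} {c : V → Fin k}

lemma ConsistentAt.union_left {S T : Set V} {w : V} (h : ConsistentAt G c S w)
    (hle : setDist G w S ≤ setDist G w T) : ConsistentAt G c (S ∪ T) w :=
  let ⟨x, hx, hxc⟩ := h
  ⟨x, mem_nearest_union_left G hx hle, hxc⟩

end Nearest

section Rval

variable {V : Type*} {k : ℕ} {G : SimpleGraph V} {c : V → Fin k} {i : Fin k} {A S : Set V}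
  {u w : V}

lemma le_rval_of_not_colorInconsistentOn (hcons : ¬ ColorInconsistentOn G c i A S)
    (hw : w ∈ A) (hcw : c w = i) : setDist G w S - G.edist w u ≤ rval G c i A u S := by
  rw [rval, if_neg hcons]
  exact le_iSup₂ (f := fun w _ => setDist G w S - G.edist w u) w ⟨hw, hcw⟩

lemma rval_le_of_not_consistentAt (hw : w ∈ A) (hcw : c w = i)
    (hincons : ¬ ConsistentAt G c S w) : rval G c i A u S ≤ setDist G w S - G.edist w u := by
  rw [rval, if_pos ⟨w, hw, hcw, hincons⟩]
  exact iInf₂_le w ⟨hw, hcw, hincons⟩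

end Rval

lemma rightConsistent_iff_leftConsistent_swap {V : Type*} {k : ℕ} {G : SimpleGraph V}
    {c : V → Fin k} {i : Fin k} {A B S' S'' : Set V} {v vj : V} :
    RightConsistent G c i A B v vj S' S'' ↔ LeftConsistent G c i B A vj v S'' S' :=
  Iff.rfl

lemma consistentAt_union_of_leftConsistent {V : Type*} {k : ℕ} {G : SimpleGraph V}
    {c : V → Fin k} {i : Fin k} {A B S' S'' : Set V} {v vj w : V}
    (hleft : LeftConsistent G c i A B v vj S' S'') (hw : w ∈ A) (hcw : c w = i)
    (hlaw : ∀ x ∈ S'', G.edist w x = G.edist w v + 1 + G.edist vj x) :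
    ConsistentAt G c (S' ∪ S'') w := by
  have hS'' : setDist G w S'' = G.edist w v + 1 + setDist G vj S'' :=
    setDist_eq_add_of_edist_eq G _ hlaw
  have via_S'' : ColorInNearest G c i S'' vj → setDist G w S'' ≤ setDist G w S' →
      ConsistentAt G c (S' ∪ S'') w := fun ⟨y, hy, hyc⟩ hle =>
    ⟨y, mem_nearest_union_right G (mem_nearest_of_edist_eq G _ hlaw hy) hle, hyc.trans hcw.symm⟩
  by_cases hcons : ConsistentAt G c S' w
  · by_cases hle : setDist G w S' ≤ setDist G w S''
    · exact hcons.union_left hle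
    refine via_S'' ?_ (le_of_not_ge hle)
    rcases hleft with ⟨hH, hr | hL⟩ | ⟨-, hL, -⟩
    · refine absurd ?_ hle
      rw [hS'', add_assoc, add_comm, add_comm 1]
      exact tsub_le_iff_right.mp ((le_rval_of_not_colorInconsistentOn hH hw hcw).trans hr)
    · exact hL
    · exact hL
  · rcases hleft with ⟨hH, -⟩ | ⟨-, hL, hr⟩
    · exact absurd ⟨w, hw, hcw, hcons⟩ hH
    have hgap : setDist G vj S'' + 1 ≤ setDist G w S' - G.edist w v :=
      hr.trans (rval_le_of_not_consistentAt hw hcw hcons)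
    have hclose : G.edist w v ≤ setDist G w S' :=
      (tsub_pos_iff_lt.mp ((zero_lt_one.trans_le le_add_self).trans_le hgap)).le
    refine via_S'' hL ?_
    rw [hS'', add_assoc, add_comm 1]
    exact add_le_of_le_tsub_left_of_le hclose hgap

theorem consistency_merge_general {V : Type*} {k : ℕ}
    (G : SimpleGraph V) (c : V → Fin k) (i : Fin k) (A B : Set V) (v vj : V)
    (hcover : A ∪ B = Set.univ)
    (hlaw : ∀ w ∈ A, ∀ x ∈ B, G.edist w x = G.edist w v + 1 + G.edist vj x)
    (S' S'' : Set V) (hS'A : S' ⊆ A) (hS''B : S'' ⊆ B)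
    (hleft : LeftConsistent G c i A B v vj S' S'')
    (hright : RightConsistent G c i A B v vj S' S'') :
    ∀ w : V, c w = i → ConsistentAt G c (S' ∪ S'') w := by
  intro w hcw
  rcases (hcover ▸ Set.mem_univ w : w ∈ A ∪ B) with hwA | hwB
  · exact consistentAt_union_of_leftConsistent hleft hwA hcw fun x hx => hlaw w hwA x (hS''B hx)
  · rw [Set.union_comm]
    refine consistentAt_union_of_leftConsistent
      (rightConsistent_iff_leftConsistent_swap.mp hright) hwB hcw fun x hx => ?_
    rw [edist_comm, hlaw x (hS'A hx) w hwB, edist_comm (u := x), edist_comm (u := vj)]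
    ring

/-- Lemma 1 of the paper: if color `i` is left and right consistent, then it is
consistent in `(T*, S' ∪ S'')`. -/
theorem consistency_merge {V : Type*} {k : ℕ}
    (G : SimpleGraph V) (c : V → Fin k) (i : Fin k) (A B : Set V) (v vj : V)
    (hconn : G.Connected)
    (hv : v ∈ A) (hvj : vj ∈ B) (hdisj : Disjoint A B) (hcover : A ∪ B = Set.univ)
    (hlaw : ∀ w ∈ A, ∀ x ∈ B, G.edist w x = G.edist w v + 1 + G.edist vj x)
    (S' S'' : Set V) (hS'A : S' ⊆ A) (hS''B : S'' ⊆ B)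
    (hleft : LeftConsistent G c i A B v vj S' S'')
    (hright : RightConsistent G c i A B v vj S' S'') :
    ∀ w : V, c w = i → ConsistentAt G c (S' ∪ S'') w :=
  consistency_merge_general G c i A B v vj hcover hlaw S' S'' hS'A hS''B hleft hright
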